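/- arXiv:1611.01355 — 9 statements merged into one kernel-verified Lean document; each statement's English description precedes it below -/
import Mathlib

section
/- Every directed Archimedean partially ordered vector space X is a pre-Riesz space: for all x, y, z ∈ X, if every upper bound of {y, z} that can be written is such that {x+y, x+z}^u ⊆ {y, z}^u, then x ≥ 0. -/
/-! Iterating the hypothesis on a common upper bound `w` of `y` and `z` (which exists by
directedness) shows that `n • x + w` is an upper bound of `{y, z}` for every `n`. Hence
`n • (-x) ≤ w - y` for all `n`, and the Archimedean property gives `-x ≤ 0`. -/

theorem nsmul_add_mem_upperBounds_of_upperBounds_image_add_subset {X : Type*} [AddCommMonoid X]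
    [Preorder X] [IsOrderedAddMonoid X] {s : Set X} {x w : X}
    (h : upperBounds ((x + ·) '' s) ⊆ upperBounds s) (hw : w ∈ upperBounds s) (n : ℕ) :
    n • x + w ∈ upperBounds s := by
  induction n with
  | zero => simpa using hw
  | succ n ih =>
    rw [succ_nsmul', add_assoc]
    exact h ((add_right_mono (a := x)).mem_upperBounds_image ih)

theorem exists_ge_ge_of_forall_eq_sub_of_nonneg {X : Type*} [AddCommGroup X] [PartialOrder X]
    [IsOrderedAddMonoid X] (hdir : ∀ x : X, ∃ y z : X, 0 ≤ y ∧ 0 ≤ z ∧ x = y - z) (y z : X) :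
    ∃ w, y ≤ w ∧ z ≤ w := by
  obtain ⟨p, q, hp, hq, hpq⟩ := hdir (y - z)
  refine ⟨z + p, ?_, le_add_of_nonneg_right hp⟩
  rw [← sub_le_iff_le_add', hpq]
  exact sub_le_self p hq

theorem stmt2_general {X : Type*} [AddCommGroup X] [PartialOrder X] [IsOrderedAddMonoid X]
    (hdir : ∀ x : X, ∃ y z : X, 0 ≤ y ∧ 0 ≤ z ∧ x = y - z)
    (harch : ∀ x y : X, (∀ n : ℕ, n • x ≤ y) → x ≤ 0)
    (x y z : X)
    (h : upperBounds {x + y, x + z} ⊆ upperBounds {y, z}) : 0 ≤ x := by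
  obtain ⟨w, hyw, hzw⟩ := exists_ge_ge_of_forall_eq_sub_of_nonneg hdir y z
  have hw : w ∈ upperBounds {y, z} := by simp [upperBounds_insert, hyw, hzw]
  rw [← Set.image_pair] at h
  have hbound (n : ℕ) : n • (-x) ≤ w - y := by
    rw [neg_nsmul, neg_le_sub_iff_le_add, add_comm]
    exact nsmul_add_mem_upperBounds_of_upperBounds_image_add_subset h hw n (Set.mem_insert y _)
  exact neg_nonpos.mp (harch (-x) (w - y) hbound)

/-- Every directed Archimedean partially ordered vector space is pre-Riesz:
if `{x+y, x+z}ᵘ ⊆ {y, z}ᵘ` then `0 ≤ x`. -/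
theorem stmt2 {X : Type*} [AddCommGroup X] [PartialOrder X] [IsOrderedAddMonoid X]
    [Module ℝ X] [PosSMulStrictMono ℝ X]
    (hdir : ∀ x : X, ∃ y z : X, 0 ≤ y ∧ 0 ≤ z ∧ x = y - z)
    (harch : ∀ x y : X, (∀ n : ℕ, n • x ≤ y) → x ≤ 0)
    (x y z : X)
    (h : upperBounds {x + y, x + z} ⊆ upperBounds {y, z}) : 0 ≤ x :=
  stmt2_general hdir harch x y z h
end

section
/- The disjoint complement M^d = {y ∈ X : y ⊥ x for all x ∈ M} of any subset M of a pre-Riesz space X is a linear subspace of X. -/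
/-- Disjointness in a partially ordered vector space. -/
def PDisj {X : Type*} [AddCommGroup X] [PartialOrder X] (x y : X) : Prop :=
  upperBounds {x + y, -x - y} = upperBounds {x - y, -x + y}

/-- The disjoint complement of a subset `M`. -/
def Dcompl {X : Type*} [AddCommGroup X] [PartialOrder X] (M : Set X) : Set X :=
  {y | ∀ x ∈ M, PDisj y x}

/-!
Write `SupNonneg a b` for "every common upper bound of `a` and `b` is `≥ 0`". By the change of
variable `t = 2f + a - b`, `a ⊥ b` says exactly that `SupNonneg (±a) (±b)` holds for all four
choices of signs. So it suffices that, for fixed `b`, `SupNonneg · b` is closed under addition and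
under multiplication by scalars `c ≥ 0`. Both come from the pre-Riesz property, applied to a common
upper bound `g` of the new element and `b`. For `a₁ + a₂`, every upper bound `f` of `g, g + a₂`
dominates `a₂` (apply `SupNonneg a₁ b` to `f - a₂`) and then `0`. For `t • a` with `t ∈ [0, 1]`,
every upper bound `f` of `g, g + (1 - t) • a` dominates `a`, hence `0`, hence by convexity
`(1 - t) • a`. Scalars `c > 1` reduce to `c⁻¹` by symmetry and homogeneity.
-/

section SupNonneg

variable {X : Type*} [AddCommGroup X] [PartialOrder X]

variable (X) in
def IsPreRiesz : Prop :=
  ∀ x y z : X, upperBounds {x + y, x + z} ⊆ upperBounds {y, z} → 0 ≤ x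

/-- In a vector lattice this says `0 ≤ a ⊔ b`. -/
def SupNonneg (a b : X) : Prop :=
  ∀ f, a ≤ f → b ≤ f → 0 ≤ f

theorem SupNonneg.symm {a b : X} (h : SupNonneg a b) : SupNonneg b a :=
  fun f hb ha => h f ha hb

section Module

variable [Module ℝ X] [PosSMulMono ℝ X]

theorem SupNonneg.smul {a b : X} (h : SupNonneg a b) {c : ℝ} (hc : 0 < c) :
    SupNonneg (c • a) (c • b) := by
  have cancel : ∀ x : X, c⁻¹ • c • x = x := fun x => by simp [smul_smul, hc.ne']
  intro f ha hb
  have hf := h (c⁻¹ • f) (cancel a ▸ smul_le_smul_of_nonneg_left ha (inv_nonneg.2 hc.le))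
    (cancel b ▸ smul_le_smul_of_nonneg_left hb (inv_nonneg.2 hc.le))
  simpa [smul_smul, hc.ne'] using smul_nonneg hc.le hf

theorem supNonneg_smul_iff {a b : X} {c : ℝ} (hc : 0 < c) :
    SupNonneg (c • a) (c • b) ↔ SupNonneg a b :=
  ⟨fun h => by simpa [smul_smul, hc.ne'] using h.smul (inv_pos.2 hc), fun h => h.smul hc⟩

end Module

variable [IsOrderedAddMonoid X]

theorem le_of_le_of_sub_eq {u v u' v' : X} (h : u ≤ v) (e : v - u = v' - u') : u' ≤ v' :=
  sub_nonneg.1 (e ▸ sub_nonneg.2 h)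

theorem SupNonneg.add_left (hX : IsPreRiesz X)
    {a₁ a₂ b : X} (h₁ : SupNonneg a₁ b) (h₂ : SupNonneg a₂ b) : SupNonneg (a₁ + a₂) b := by
  intro g hg hb
  refine hX g 0 a₂ fun f hf => ?_
  simp only [upperBounds_insert, upperBounds_singleton, Set.mem_inter_iff, Set.mem_Ici,
    add_zero] at hf ⊢
  have ha₂ : a₂ ≤ f :=
    sub_nonneg.1 (h₁ (f - a₂) (le_of_le_of_sub_eq (hg.trans hf.1) (by abel))
      (le_of_le_of_sub_eq (add_le_add_left hb a₂ |>.trans hf.2) (by abel)))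
  exact ⟨h₂ f ha₂ (hb.trans hf.1), ha₂⟩

variable [Module ℝ X] [PosSMulMono ℝ X]

theorem SupNonneg.smul_left_of_le_one (hX : IsPreRiesz X)
    {a b : X} (h : SupNonneg a b) {t : ℝ} (ht₀ : 0 ≤ t) (ht₁ : t ≤ 1) :
    SupNonneg (t • a) b := by
  intro g hg hb
  refine hX g ((1 - t) • a) 0 fun f hf => ?_
  simp only [upperBounds_insert, upperBounds_singleton, Set.mem_inter_iff, Set.mem_Ici,
    add_zero] at hf ⊢
  have ha : a ≤ f := calc
    a = t • a + (1 - t) • a := by module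
    _ ≤ g + (1 - t) • a := add_le_add_left hg _
    _ ≤ f := hf.1
  have hf₀ : 0 ≤ f := h f ha (hb.trans hf.2)
  refine ⟨(smul_le_smul_of_nonneg_left ha (sub_nonneg.2 ht₁)).trans ?_, hf₀⟩
  exact le_of_le_of_sub_eq (smul_nonneg ht₀ hf₀) (by module)

theorem SupNonneg.smul_left (hX : IsPreRiesz X)
    {a b : X} (h : SupNonneg a b) {c : ℝ} (hc : 0 ≤ c) : SupNonneg (c • a) b := by
  rcases le_or_gt c 1 with hc₁ | hc₁
  · exact h.smul_left_of_le_one hX hc hc₁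
  · have hc₀ : 0 < c := zero_lt_one.trans hc₁
    have h' :=
      (h.symm.smul_left_of_le_one hX (inv_nonneg.2 hc) (inv_le_one_of_one_le₀ hc₁.le)).symm
    simpa [smul_smul, hc₀.ne'] using h'.smul hc₀

end SupNonneg

section PDisj

variable {X : Type*} [AddCommGroup X] [PartialOrder X]

theorem pdisj_iff_forall_le_imp {a b : X} :
    PDisj a b ↔ (∀ t, a + b ≤ t → -a - b ≤ t → a - b ≤ t) ∧
      (∀ t, -a - b ≤ t → a + b ≤ t → -a + b ≤ t) ∧
      (∀ t, a - b ≤ t → -a + b ≤ t → a + b ≤ t) ∧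
      (∀ t, -a + b ≤ t → a - b ≤ t → -a - b ≤ t) := by
  simp only [PDisj, Set.ext_iff, upperBounds_insert, upperBounds_singleton, Set.mem_inter_iff,
    Set.mem_Ici]
  exact ⟨fun h => ⟨fun t h₁ h₂ => ((h t).1 ⟨h₁, h₂⟩).1, fun t h₁ h₂ => ((h t).1 ⟨h₂, h₁⟩).2,
      fun t h₁ h₂ => ((h t).2 ⟨h₁, h₂⟩).1, fun t h₁ h₂ => ((h t).2 ⟨h₂, h₁⟩).2⟩,
    fun ⟨h₁, h₂, h₃, h₄⟩ t => ⟨fun ⟨u, v⟩ => ⟨h₁ t u v, h₂ t v u⟩,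
      fun ⟨u, v⟩ => ⟨h₃ t u v, h₄ t v u⟩⟩⟩

variable [IsOrderedAddMonoid X] [Module ℝ X] [PosSMulMono ℝ X]

theorem forall_le_imp_iff_supNonneg (a b : X) :
    (∀ t, a + b ≤ t → -a - b ≤ t → a - b ≤ t) ↔ SupNonneg (-a) b := by
  rw [← supNonneg_smul_iff (two_pos : (0 : ℝ) < 2), two_smul, two_smul]
  constructor
  · intro h f ha hb
    exact le_of_le_of_sub_eq (h (f + a - b) (le_of_le_of_sub_eq hb (by abel))
      (le_of_le_of_sub_eq ha (by abel))) (by abel)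
  · intro h t h₁ h₂
    exact le_of_le_of_sub_eq (h (t - a + b) (le_of_le_of_sub_eq h₂ (by abel))
      (le_of_le_of_sub_eq h₁ (by abel))) (by abel)

theorem pdisj_iff_supNonneg {a b : X} :
    PDisj a b ↔ SupNonneg (-a) b ∧ SupNonneg a (-b) ∧ SupNonneg (-a) (-b) ∧ SupNonneg a b := by
  have h₂ := forall_le_imp_iff_supNonneg (-a) (-b)
  have h₃ := forall_le_imp_iff_supNonneg a (-b)
  have h₄ := forall_le_imp_iff_supNonneg (-a) b
  simp only [neg_neg, sub_neg_eq_add, ← sub_eq_add_neg] at h₂ h₃ h₄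
  rw [pdisj_iff_forall_le_imp, forall_le_imp_iff_supNonneg, h₂, h₃, h₄]

theorem pdisj_zero_left (b : X) : PDisj 0 b := by
  simp only [pdisj_iff_supNonneg, neg_zero]
  exact ⟨fun f h _ => h, fun f h _ => h, fun f h _ => h, fun f h _ => h⟩

theorem PDisj.neg_left {a b : X} (h : PDisj a b) : PDisj (-a) b := by
  rw [pdisj_iff_supNonneg, neg_neg] at *
  tauto

theorem PDisj.add_left (hX : IsPreRiesz X)
    {a₁ a₂ b : X} (h₁ : PDisj a₁ b) (h₂ : PDisj a₂ b) : PDisj (a₁ + a₂) b := by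
  rw [pdisj_iff_supNonneg, neg_add] at *
  exact ⟨h₁.1.add_left hX h₂.1, h₁.2.1.add_left hX h₂.2.1, h₁.2.2.1.add_left hX h₂.2.2.1,
    h₁.2.2.2.add_left hX h₂.2.2.2⟩

theorem PDisj.smul_left (hX : IsPreRiesz X)
    {a b : X} (h : PDisj a b) (c : ℝ) : PDisj (c • a) b := by
  wlog hc : 0 ≤ c generalizing a c
  · simpa using this h.neg_left (-c) (by linarith)
  rw [pdisj_iff_supNonneg, ← smul_neg] at *
  exact ⟨h.1.smul_left hX hc, h.2.1.smul_left hX hc, h.2.2.1.smul_left hX hc,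
    h.2.2.2.smul_left hX hc⟩

end PDisj

theorem stmt3_general {X : Type*} [AddCommGroup X] [PartialOrder X] [IsOrderedAddMonoid X] [Module ℝ X] [PosSMulStrictMono ℝ X]
    (hpr : ∀ x y z : X, upperBounds {x + y, x + z} ⊆ upperBounds {y, z} → 0 ≤ x)
    (M : Set X) :
    (0 : X) ∈ Dcompl M ∧
    (∀ y₁ y₂ : X, y₁ ∈ Dcompl M → y₂ ∈ Dcompl M → y₁ + y₂ ∈ Dcompl M) ∧
    (∀ (c : ℝ) (y : X), y ∈ Dcompl M → c • y ∈ Dcompl M) :=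
  ⟨fun x _ => pdisj_zero_left x,
    fun _ _ h₁ h₂ x hx => (h₁ x hx).add_left hpr (h₂ x hx),
    fun c _ h x hx => (h x hx).smul_left hpr c⟩

/-- In a pre-Riesz space, the disjoint complement of any set is a linear subspace. -/
theorem stmt3 {X : Type*} [AddCommGroup X] [PartialOrder X] [IsOrderedAddMonoid X] [Module ℝ X] [PosSMulStrictMono ℝ X] [PosSMulReflectLT ℝ X]
    (hpr : ∀ x y z : X, upperBounds {x + y, x + z} ⊆ upperBounds {y, z} → 0 ≤ x)
    (M : Set X) :
    (0 : X) ∈ Dcompl M ∧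
    (∀ y₁ y₂ : X, y₁ ∈ Dcompl M → y₂ ∈ Dcompl M → y₁ + y₂ ∈ Dcompl M) ∧
    (∀ (c : ℝ) (y : X), y ∈ Dcompl M → c • y ∈ Dcompl M) :=
  stmt3_general hpr M
end

section
/- Let X be a pre-Riesz space with vector lattice cover (Y, i), i.e. i: X → Y is a bipositive linear map onto an order dense subspace of the vector lattice Y. Then for all x, y ∈ X, x ⊥ y in X if and only if i(x) ⊥ i(y) in Y (i.e. |i(x)| ∧ |i(y)| = 0). -/
section OrderDense

variable {X Y : Type*} [PartialOrder X] [Preorder Y] (f : X ↪o Y)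

theorem OrderEmbedding.upperBounds_image_subset_iff
    (hdense : ∀ y, IsGLB (Set.range f ∩ Set.Ici y) y) {S T : Set X} :
    upperBounds (f '' S) ⊆ upperBounds (f '' T) ↔ upperBounds S ⊆ upperBounds T := by
  constructor
  · intro h u hu
    have hfu : f u ∈ upperBounds (f '' T) :=
      h (Set.forall_mem_image.2 fun s hs => f.le_iff_le.2 (hu hs))
    exact fun t ht => f.le_iff_le.1 (hfu (Set.mem_image_of_mem f ht))
  · intro h v hv
    rintro _ ⟨t, ht, rfl⟩
    refine (hdense v).2 ?_
    rintro _ ⟨⟨z, rfl⟩, hvz⟩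
    have hz : z ∈ upperBounds S := fun s hs =>
      f.le_iff_le.1 ((hv (Set.mem_image_of_mem f hs)).trans hvz)
    exact f.le_iff_le.2 (h hz ht)

theorem OrderEmbedding.upperBounds_image_eq_iff
    (hdense : ∀ y, IsGLB (Set.range f ∩ Set.Ici y) y) {S T : Set X} :
    upperBounds (f '' S) = upperBounds (f '' T) ↔ upperBounds S = upperBounds T := by
  simp only [Set.Subset.antisymm_iff, f.upperBounds_image_subset_iff hdense]

end OrderDense

theorem upperBounds_pair_neg {α : Type*} [Lattice α] [AddGroup α] (a : α) :
    upperBounds {a, -a} = Set.Ici |a| :=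
  isLUB_pair.upperBounds_eq

section LatticeOrderedGroup

variable {α : Type*} [Lattice α] [AddCommGroup α] [AddLeftMono α]

theorem abs_add_abs_eq_abs_add_sup_abs_sub (a b : α) : |a| + |b| = |a + b| ⊔ |a - b| := by
  have hl : |a| + |b| = ((a + b) ⊔ (-a + b)) ⊔ ((a + -b) ⊔ (-a + -b)) := by
    rw [abs, abs, add_sup, sup_add, sup_add]
  have hr : |a + b| ⊔ |a - b| = ((a + b) ⊔ (-a + -b)) ⊔ ((a + -b) ⊔ (-a + b)) := by
    rw [abs, abs, neg_add, sub_eq_add_neg, neg_add, neg_neg]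
  rw [hl, hr]
  ac_rfl

theorem abs_add_self (a : α) : |a + a| = |a| + |a| := by
  rw [abs_add_abs_eq_abs_add_sup_abs_sub, sub_self, abs_zero, sup_of_le_left (abs_nonneg _)]

theorem abs_add_eq_add_abs_of_abs_inf_abs_eq_zero {a b : α} (h : |a| ⊓ |b| = 0) :
    |a + b| = |a| + |b| := by
  -- disjointness turns the reverse triangle inequality into the lower bound `|a| + |b|`
  have hdiff : |(|a| - |b|)| = |a| + |b| := by
    have := two_nsmul_inf_eq_add_sub_abs_sub |a| |b|
    rw [h, smul_zero, eq_comm, sub_eq_zero, abs_sub_comm] at this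
    exact this.symm
  refine le_antisymm (abs_add_le a b) ?_
  simpa [hdiff] using abs_abs_sub_abs_le a (-b)

theorem abs_inf_abs_eq_zero_iff (a b : α) : |a| ⊓ |b| = 0 ↔ |a + b| = |a - b| := by
  constructor
  · intro h
    have h' : |a| ⊓ |-b| = 0 := by rwa [abs_neg]
    rw [abs_add_eq_add_abs_of_abs_inf_abs_eq_zero h, sub_eq_add_neg,
      abs_add_eq_add_abs_of_abs_inf_abs_eq_zero h', abs_neg]
  · intro h
    have hsum : |a| + |b| = |a + b| := by
      rw [abs_add_abs_eq_abs_add_sup_abs_sub, h, sup_idem]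
    have huv : (|a| + |a|) + (|b| + |b|) = (|a| + |a|) ⊔ (|b| + |b|) := by
      have := abs_add_abs_eq_abs_add_sup_abs_sub (a + b) (a - b)
      rw [← h, ← hsum, show a + b + (a - b) = a + a by abel,
        show a + b - (a - b) = b + b by abel, abs_add_self, abs_add_self] at this
      rw [← this]
      abel
    have hinf : (|a| + |a|) ⊓ (|b| + |b|) = 0 := by
      simpa [huv] using inf_add_sup (|a| + |a|) (|b| + |b|)
    refine le_antisymm ?_ (le_inf (abs_nonneg a) (abs_nonneg b))
    exact hinf ▸ inf_le_inf (le_add_of_nonneg_left (abs_nonneg a))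
      (le_add_of_nonneg_left (abs_nonneg b))

end LatticeOrderedGroup

theorem stmt4_general {X Y : Type*}
    [AddCommGroup X] [PartialOrder X] [IsOrderedAddMonoid X] [Module ℝ X]
    [Lattice Y] [AddCommGroup Y] [CovariantClass Y Y (· + ·) (· ≤ ·)] [Module ℝ Y]
    (i : X →ₗ[ℝ] Y) (hbi : ∀ x : X, 0 ≤ x ↔ 0 ≤ i x)
    (hdense : ∀ y : Y, IsGLB {d : Y | (∃ x : X, i x = d) ∧ y ≤ d} y)
    (x y : X) : PDisj x y ↔ |i x| ⊓ |i y| = 0 := by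
  let e : X ↪o Y := OrderEmbedding.ofMapLEIff i fun a b => by
    rw [← sub_nonneg, ← map_sub, ← hbi, sub_nonneg]
  have hpair (p : X) : e '' {p, -p} = {i p, -i p} := by
    rw [Set.image_pair, OrderEmbedding.coe_ofMapLEIff, map_neg]
  have hneg : -x + y = -(x - y) := by abel
  rw [abs_inf_abs_eq_zero_iff, ← map_add, ← map_sub, PDisj, ← neg_add', hneg,
    ← e.upperBounds_image_eq_iff hdense, hpair, hpair, upperBounds_pair_neg,
    upperBounds_pair_neg, Set.Ici_inj]

/-- If `(Y, i)` is a vector lattice cover of a pre-Riesz space `X`, then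
`x ⊥ y` in `X` iff `|i x| ⊓ |i y| = 0` in `Y`. -/
theorem stmt4 {X Y : Type*}
    [AddCommGroup X] [PartialOrder X] [IsOrderedAddMonoid X] [Module ℝ X] [PosSMulStrictMono ℝ X] [PosSMulReflectLT ℝ X]
    [Lattice Y] [AddCommGroup Y] [CovariantClass Y Y (· + ·) (· ≤ ·)] [Module ℝ Y]
    (hsmulY : ∀ (c : ℝ) (v : Y), 0 ≤ c → 0 ≤ v → 0 ≤ c • v)
    (hpr : ∀ x y z : X, upperBounds {x + y, x + z} ⊆ upperBounds {y, z} → 0 ≤ x)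
    (i : X →ₗ[ℝ] Y) (hbi : ∀ x : X, 0 ≤ x ↔ 0 ≤ i x)
    (hdense : ∀ y : Y, IsGLB {d : Y | (∃ x : X, i x = d) ∧ y ≤ d} y)
    (x y : X) : PDisj x y ↔ |i x| ⊓ |i y| = 0 :=
  stmt4_general i hbi hdense x y
end

section
/- Let X be a directed partially ordered vector space with a semimonotone norm ‖·‖, let Y be a directed partially ordered vector space, and let i: X → Y be a bipositive linear map with i[X] majorizing in Y. Then ρ(y) := inf{‖x‖ : x ∈ X, −i(x) ≤ y ≤ i(x)} defines a seminorm on Y. -/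
open Pointwise

/-- The extension `ρ(y) = inf{‖x‖ : x ∈ X, -i x ≤ y ≤ i x}` of a semimonotone norm on a
directed partially ordered vector space `X` along a bipositive linear map `i : X → Y`
with majorizing image is a seminorm on `Y`. -/
theorem stmt5 {X Y : Type*}
    [NormedAddCommGroup X] [NormedSpace ℝ X] [PartialOrder X]
    [CovariantClass X X (· + ·) (· ≤ ·)]
    (hsmulX : ∀ (c : ℝ) (x : X), 0 ≤ c → 0 ≤ x → 0 ≤ c • x)
    [AddCommGroup Y] [PartialOrder Y] [CovariantClass Y Y (· + ·) (· ≤ ·)] [Module ℝ Y]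
    (hsmulY : ∀ (c : ℝ) (v : Y), 0 ≤ c → 0 ≤ v → 0 ≤ c • v)
    (hdirX : ∀ x : X, ∃ u v : X, 0 ≤ u ∧ 0 ≤ v ∧ x = u - v)
    (hdirY : ∀ y : Y, ∃ u v : Y, 0 ≤ u ∧ 0 ≤ v ∧ y = u - v)
    (M : ℝ) (hM : 0 < M)
    (hsemi : ∀ x y : X, 0 ≤ x → x ≤ y → ‖x‖ ≤ M * ‖y‖)
    (i : X →ₗ[ℝ] Y) (hbi : ∀ x : X, 0 ≤ x ↔ 0 ≤ i x)
    (hmaj : ∀ y : Y, ∃ x : X, y ≤ i x)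
    (ρ : Y → ℝ)
    (hρ : ∀ y : Y, ρ y = sInf {r : ℝ | ∃ x : X, -i x ≤ y ∧ y ≤ i x ∧ ‖x‖ = r}) :
    (∀ y : Y, 0 ≤ ρ y) ∧ ρ 0 = 0 ∧
    (∀ (c : ℝ) (y : Y), ρ (c • y) = |c| * ρ y) ∧
    (∀ y z : Y, ρ (y + z) ≤ ρ y + ρ z) := by
  set S : Y → Set ℝ := fun y => {r : ℝ | ∃ x : X, -i x ≤ y ∧ y ≤ i x ∧ ‖x‖ = r} with hS
  have hbdd : ∀ y : Y, BddBelow (S y) := fun y =>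
    ⟨0, fun r ⟨x, _, _, hx⟩ => hx ▸ norm_nonneg x⟩
  -- monotonicity of i
  have hmono : ∀ a b : X, a ≤ b → i a ≤ i b := by
    intro a b h
    have := (hbi (b - a)).1 (by simpa using sub_nonneg.2 h)
    rw [map_sub] at this
    exact sub_nonneg.1 this
  -- nonemptiness
  have hne : ∀ y : Y, (S y).Nonempty := by
    intro y
    obtain ⟨a, ha⟩ := hmaj y
    obtain ⟨b, hb⟩ := hmaj (-y)
    obtain ⟨u, v, hu, hv, huv⟩ := hdirX (a - b)
    have hav : a + v = u + b := (sub_eq_sub_iff_add_eq_add).1 huv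
    have h1 : a ≤ a + v := by simpa using add_le_add_left hv a
    have h2 : b ≤ a + v := by
      rw [hav]
      simpa [add_comm] using add_le_add_left hu b
    refine ⟨‖a + v‖, a + v, ?_, le_trans ha (hmono _ _ h1), rfl⟩
    have h3 : -y ≤ i (a + v) := le_trans hb (hmono _ _ h2)
    have h4 := sub_nonneg.2 h3
    rw [show i (a + v) - -y = y - -i (a + v) by abel] at h4
    exact sub_nonneg.1 h4
  have hpos : ∀ y : Y, 0 ≤ ρ y := by
    intro y
    rw [hρ]
    exact Real.sInf_nonneg fun r ⟨x, _, _, hx⟩ => hx ▸ norm_nonneg x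
  have hzero : ρ 0 = 0 := by
    have h1 : ρ 0 ≤ 0 := by
      rw [hρ]
      exact csInf_le (hbdd 0) ⟨0, by simp, by simp, norm_zero⟩
    linarith [hpos 0]
  -- sandwich scaling lemma
  have hsand : ∀ (c : ℝ) (x : X) (y : Y), -i x ≤ y → y ≤ i x →
      -i (|c| • x) ≤ c • y ∧ c • y ≤ i (|c| • x) := by
    have base : ∀ (c : ℝ), 0 ≤ c → ∀ (x : X) (y : Y), -i x ≤ y → y ≤ i x →
        -i (c • x) ≤ c • y ∧ c • y ≤ i (c • x) := by
      intro c hc x y h1 h2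
      constructor
      · have h := hsmulY c (y - (-i x)) hc (sub_nonneg.2 h1)
        rw [smul_sub] at h
        have := sub_nonneg.1 h
        rw [map_smul]
        calc -(c • i x) = c • (-i x) := (smul_neg c (i x)).symm
          _ ≤ c • y := this
      · have h := hsmulY c (i x - y) hc (sub_nonneg.2 h2)
        rw [smul_sub] at h
        have := sub_nonneg.1 h
        rw [map_smul]; exact this
    intro c x y h1 h2
    rcases le_or_gt 0 c with hc | hc
    · simpa [abs_of_nonneg hc] using base c hc x y h1 h2
    · have h1' : -i x ≤ -y := by
        have h := sub_nonneg.2 h2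
        rw [show i x - y = -y - -i x by abel] at h
        exact sub_nonneg.1 h
      have h2' : -y ≤ i x := by
        have h := sub_nonneg.2 h1
        rw [show y - -i x = i x - -y by abel] at h
        exact sub_nonneg.1 h
      have := base (-c) (by linarith) x (-y) h1' h2'
      simpa [abs_of_neg hc, smul_neg] using this
  -- key scaling inequality
  have key : ∀ (c : ℝ) (y : Y), ρ (c • y) ≤ |c| * ρ y := by
    intro c y
    rw [hρ, hρ, show |c| * sInf (S y) = |c| • sInf (S y) from rfl,
      ← Real.sInf_smul_of_nonneg (abs_nonneg c)]
    refine csInf_le_csInf (hbdd _) ((hne y).smul_set) ?_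
    rintro r ⟨s, ⟨x, h1, h2, hx⟩, rfl⟩
    refine ⟨|c| • x, (hsand c x y h1 h2).1, (hsand c x y h1 h2).2, ?_⟩
    simp [norm_smul, abs_abs, hx]
  have hhom : ∀ (c : ℝ) (y : Y), ρ (c • y) = |c| * ρ y := by
    intro c y
    rcases eq_or_ne c 0 with rfl | hc
    · simp [hzero]
    · refine le_antisymm (key c y) ?_
      have h := key c⁻¹ (c • y)
      rw [smul_smul, inv_mul_cancel₀ hc, one_smul, abs_inv] at h
      have habs : 0 < |c| := abs_pos.2 hc
      calc |c| * ρ y ≤ |c| * (|c|⁻¹ * ρ (c • y)) := by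
            exact mul_le_mul_of_nonneg_left h habs.le
        _ = ρ (c • y) := by field_simp
  -- triangle inequality
  have htri : ∀ y z : Y, ρ (y + z) ≤ ρ y + ρ z := by
    intro y z
    have H : ∀ r ∈ S y, ∀ s ∈ S z, ρ (y + z) ≤ r + s := by
      rintro r ⟨x₁, h1, h2, hx₁⟩ s ⟨x₂, h3, h4, hx₂⟩
      have hmem : ‖x₁ + x₂‖ ∈ S (y + z) := by
        refine ⟨x₁ + x₂, ?_, ?_, rfl⟩
        · rw [map_add, neg_add]
          exact add_le_add h1 h3
        · rw [map_add]
          exact add_le_add h2 h4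
      calc ρ (y + z) ≤ ‖x₁ + x₂‖ := (hρ _) ▸ csInf_le (hbdd _) hmem
        _ ≤ ‖x₁‖ + ‖x₂‖ := norm_add_le _ _
        _ = r + s := by rw [hx₁, hx₂]
    rw [hρ y, hρ z]
    have h1 : ρ (y + z) - sInf (S z) ≤ sInf (S y) := by
      refine le_csInf (hne y) fun r hr => ?_
      have h2 : ρ (y + z) - r ≤ sInf (S z) :=
        le_csInf (hne z) fun s hs => by linarith [H r hr s hs]
      linarith
    linarith
  exact ⟨hpos, hzero, hhom, htri⟩
end

section
/- With ρ defined as ρ(y) := inf{‖x‖ : x ∈ X, −i(x) ≤ y ≤ i(x)}, if the norm ‖·‖ on X is regular, then ρ extends ‖·‖, i.e. ρ(i(x)) = ‖x‖ for all x ∈ X. -/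
/-- If the norm on `X` is regular, then the extension
`ρ(y) = inf{‖x‖ : x ∈ X, -i x ≤ y ≤ i x}` satisfies `ρ(i x) = ‖x‖` for all `x ∈ X`. -/
theorem stmt6 {X Y : Type*}
    [NormedAddCommGroup X] [NormedSpace ℝ X] [PartialOrder X]
    [CovariantClass X X (· + ·) (· ≤ ·)]
    (hsmulX : ∀ (c : ℝ) (x : X), 0 ≤ c → 0 ≤ x → 0 ≤ c • x)
    [AddCommGroup Y] [PartialOrder Y] [CovariantClass Y Y (· + ·) (· ≤ ·)] [Module ℝ Y]
    (hsmulY : ∀ (c : ℝ) (v : Y), 0 ≤ c → 0 ≤ v → 0 ≤ c • v)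
    (hdirX : ∀ x : X, ∃ u v : X, 0 ≤ u ∧ 0 ≤ v ∧ x = u - v)
    (hdirY : ∀ y : Y, ∃ u v : Y, 0 ≤ u ∧ 0 ≤ v ∧ y = u - v)
    (hreg : ∀ x : X, ‖x‖ = sInf {r : ℝ | ∃ y : X, -y ≤ x ∧ x ≤ y ∧ ‖y‖ = r})
    (i : X →ₗ[ℝ] Y) (hbi : ∀ x : X, 0 ≤ x ↔ 0 ≤ i x)
    (hmaj : ∀ y : Y, ∃ x : X, y ≤ i x)
    (ρ : Y → ℝ)
    (hρ : ∀ y : Y, ρ y = sInf {r : ℝ | ∃ x : X, -i x ≤ y ∧ y ≤ i x ∧ ‖x‖ = r})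
    (x : X) : ρ (i x) = ‖x‖ := by
  have key : ∀ a b : X, a ≤ b ↔ i a ≤ i b := by
    intro a b
    rw [← sub_nonneg, ← sub_nonneg (b := i a), ← map_sub, hbi]
  rw [hρ, hreg]
  congr 1
  ext r
  constructor
  · rintro ⟨z, h1, h2, h3⟩
    refine ⟨z, ?_, ?_, h3⟩
    · rw [key]; simpa using h1
    · rw [key]; exact h2
  · rintro ⟨z, h1, h2, h3⟩
    refine ⟨z, ?_, ?_, h3⟩
    · have := (key (-z) x).1 h1; rwa [map_neg] at this
    · exact (key _ _).1 h2
end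

section
/- Let X be a normed partially ordered vector space with closed generating cone K, let Y be a vector lattice, and let i: X → Y be bipositive linear with i[X] majorizing in Y. Define ρ(y) := inf{‖x‖ : x ∈ X, −i(x) ≤ y ≤ i(x)}. If u, v ∈ X satisfy ρ(|i(u)| ∧ |i(v)|) = 0, then u ⊥ v in X, i.e. {u+v, −u−v}^u = {u−v, −u+v}^u. -/
section LatticeOrderedGroup

variable {α : Type*} [Lattice α] [AddCommGroup α] [AddLeftMono α]

lemma abs_sup_abs_le_abs_add_add_abs_inf_abs (a b : α) :
    |a| ⊔ |b| ≤ |a + b| + |a| ⊓ |b| := by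
  have ha : |a| ≤ |a + b| + |b| := by
    simpa [abs_neg] using abs_add_le (a + b) (-b)
  have hb : |b| ≤ |a + b| + |a| := by
    simpa [abs_neg, add_comm] using abs_add_le (a + b) (-a)
  rw [add_inf]
  exact sup_le (le_inf (le_add_of_nonneg_left (abs_nonneg _)) ha)
    (le_inf hb (le_add_of_nonneg_left (abs_nonneg _)))

lemma abs_sub_le_abs_add_add_two_nsmul_inf (a b : α) :
    |a - b| ≤ |a + b| + 2 • (|a| ⊓ |b|) :=
  calc |a - b| ≤ |a| + |b| := by simpa [sub_eq_add_neg, abs_neg] using abs_add_le a (-b)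
    _ = |a| ⊓ |b| + |a| ⊔ |b| := (inf_add_sup _ _).symm
    _ ≤ |a| ⊓ |b| + (|a + b| + |a| ⊓ |b|) := by
      grw [abs_sup_abs_le_abs_add_add_abs_inf_abs]
    _ = |a + b| + 2 • (|a| ⊓ |b|) := by abel

end LatticeOrderedGroup

lemma map_le_map_iff_of_nonneg_iff {X Y F : Type*} [AddCommGroup X] [PartialOrder X]
    [AddLeftMono X] [AddCommGroup Y] [PartialOrder Y] [AddLeftMono Y] [FunLike F X Y]
    [AddMonoidHomClass F X Y] {i : F} (hbi : ∀ x, 0 ≤ x ↔ 0 ≤ i x) {x y : X} :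
    i x ≤ i y ↔ x ≤ y := by
  rw [← sub_nonneg, ← map_sub, ← hbi, sub_nonneg]

lemma le_of_forall_exists_norm_lt_le_add {X : Type*} [SeminormedAddCommGroup X] [PartialOrder X]
    [AddLeftMono X] (hclosed : IsClosed {x : X | 0 ≤ x}) {s t : X}
    (h : ∀ ε > 0, ∃ e, ‖e‖ < ε ∧ s ≤ t + e) : s ≤ t := by
  rw [← sub_nonneg]
  refine hclosed.closure_subset (Metric.mem_closure_iff.2 fun ε hε => ?_)
  obtain ⟨e, he, hle⟩ := h ε hε
  refine ⟨t - s + e, ?_, ?_⟩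
  · show 0 ≤ t - s + e
    rw [sub_add_eq_add_sub, sub_nonneg]; exact hle
  · simpa [dist_eq_norm] using he

lemma exists_le_map_norm_lt_of_sInf_eq_zero {X Y : Type*} [Norm X] [AddCommGroup Y]
    [PartialOrder Y] [AddLeftMono Y] {i : X → Y} {y : Y} (hy : 0 ≤ y) (hmaj : ∃ x, y ≤ i x)
    (h : sInf {r : ℝ | ∃ x : X, -i x ≤ y ∧ y ≤ i x ∧ ‖x‖ = r} = 0) {ε : ℝ} (hε : 0 < ε) :
    ∃ x, y ≤ i x ∧ ‖x‖ < ε := by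
  obtain ⟨x₀, hx₀⟩ := hmaj
  -- `sInf ∅ = 0` in `ℝ`, so the hypothesis says nothing unless the set is nonempty.
  have hne : {r : ℝ | ∃ x : X, -i x ≤ y ∧ y ≤ i x ∧ ‖x‖ = r}.Nonempty :=
    ⟨_, x₀, (neg_nonpos.2 (hy.trans hx₀)).trans hy, hx₀, rfl⟩
  obtain ⟨_, ⟨x, -, hx, rfl⟩, hlt⟩ := exists_lt_of_csInf_lt hne (h ▸ hε)
  exact ⟨x, hx, hlt⟩

section Disjointness

variable {X Y F : Type*} [SeminormedAddCommGroup X] [PartialOrder X] [AddLeftMono X]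
  [Lattice Y] [AddCommGroup Y] [AddLeftMono Y] [FunLike F X Y] [AddMonoidHomClass F X Y]

lemma upperBounds_add_subset_upperBounds_sub (hclosed : IsClosed {x : X | 0 ≤ x}) {i : F}
    (hbi : ∀ x, 0 ≤ x ↔ 0 ≤ i x) {a b : X}
    (hsmall : ∀ ε > 0, ∃ x, |i a| ⊓ |i b| ≤ i x ∧ ‖x‖ < ε) :
    upperBounds {a + b, -a - b} ⊆ upperBounds {a - b, -a + b} := by
  intro w hw
  have hw' : |i a + i b| ≤ i w := by
    refine sup_le ?_ ?_
    · rw [← map_add, map_le_map_iff_of_nonneg_iff hbi]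
      exact hw (by simp)
    · rw [neg_add', ← map_neg, ← map_sub, map_le_map_iff_of_nonneg_iff hbi]
      exact hw (by simp)
  have hdom : ∀ t, i t ≤ |i a - i b| → t ≤ w := by
    intro t ht
    refine le_of_forall_exists_norm_lt_le_add hclosed fun ε hε => ?_
    obtain ⟨x, hx, hxε⟩ := hsmall (ε / 2) (half_pos hε)
    refine ⟨2 • x, (norm_nsmul_le ..).trans_lt (by push_cast; linarith), ?_⟩
    rw [← map_le_map_iff_of_nonneg_iff hbi, map_add, map_nsmul]
    grw [ht, abs_sub_le_abs_add_add_two_nsmul_inf, hw', hx]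
  rintro t (rfl | rfl)
  · exact hdom _ (by rw [map_sub]; exact le_abs_self _)
  · exact hdom _ (by rw [map_add, map_neg, neg_add_eq_sub, abs_sub_comm]; exact le_abs_self _)

end Disjointness

theorem stmt7_general {X Y : Type*}
    [NormedAddCommGroup X] [NormedSpace ℝ X] [PartialOrder X]
    [CovariantClass X X (· + ·) (· ≤ ·)]
    (hclosed : IsClosed {x : X | 0 ≤ x})
    [Lattice Y] [AddCommGroup Y] [CovariantClass Y Y (· + ·) (· ≤ ·)] [Module ℝ Y]
    (i : X →ₗ[ℝ] Y) (hbi : ∀ x : X, 0 ≤ x ↔ 0 ≤ i x)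
    (hmaj : ∀ y : Y, ∃ x : X, y ≤ i x)
    (ρ : Y → ℝ)
    (hρ : ∀ y : Y, ρ y = sInf {r : ℝ | ∃ x : X, -i x ≤ y ∧ y ≤ i x ∧ ‖x‖ = r})
    (u v : X) (h : ρ (|i u| ⊓ |i v|) = 0) : PDisj u v := by
  have hsmall : ∀ ε > 0, ∃ x, |i u| ⊓ |i v| ≤ i x ∧ ‖x‖ < ε := fun ε hε =>
    exists_le_map_norm_lt_of_sInf_eq_zero (le_inf (abs_nonneg _) (abs_nonneg _)) (hmaj _)
      (hρ _ ▸ h) hε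
  have hsmall_neg : ∀ ε > 0, ∃ x, |i u| ⊓ |i (-v)| ≤ i x ∧ ‖x‖ < ε := by
    simpa only [map_neg, abs_neg] using hsmall
  refine (upperBounds_add_subset_upperBounds_sub hclosed hbi hsmall).antisymm ?_
  simpa only [neg_neg, ← sub_eq_add_neg, sub_neg_eq_add] using
    upperBounds_add_subset_upperBounds_sub hclosed hbi hsmall_neg

/-- Let `X` be a normed partially ordered vector space with closed generating cone,
`Y` a vector lattice and `i : X → Y` bipositive linear with majorizing image.
If `ρ(|i u| ⊓ |i v|) = 0`, where `ρ(y) = inf{‖x‖ : -i x ≤ y ≤ i x}`, then `u ⊥ v` in `X`. -/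
theorem stmt7 {X Y : Type*}
    [NormedAddCommGroup X] [NormedSpace ℝ X] [PartialOrder X]
    [CovariantClass X X (· + ·) (· ≤ ·)]
    (hsmulX : ∀ (c : ℝ) (x : X), 0 ≤ c → 0 ≤ x → 0 ≤ c • x)
    (hclosed : IsClosed {x : X | 0 ≤ x})
    (hgen : ∀ x : X, ∃ u v : X, 0 ≤ u ∧ 0 ≤ v ∧ x = u - v)
    [Lattice Y] [AddCommGroup Y] [CovariantClass Y Y (· + ·) (· ≤ ·)] [Module ℝ Y]
    (hsmulY : ∀ (c : ℝ) (v : Y), 0 ≤ c → 0 ≤ v → 0 ≤ c • v)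
    (i : X →ₗ[ℝ] Y) (hbi : ∀ x : X, 0 ≤ x ↔ 0 ≤ i x)
    (hmaj : ∀ y : Y, ∃ x : X, y ≤ i x)
    (ρ : Y → ℝ)
    (hρ : ∀ y : Y, ρ y = sInf {r : ℝ | ∃ x : X, -i x ≤ y ∧ y ≤ i x ∧ ‖x‖ = r})
    (u v : X) (h : ρ (|i u| ⊓ |i v|) = 0) : PDisj u v :=
  stmt7_general hclosed i hbi hmaj ρ hρ u v h
end

section
/- Let X be a pre-Riesz space equipped with a regular norm whose positive cone is closed. Then every band B in X (i.e. every subspace with B = B^dd) is norm closed. -/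
open Filter Topology

lemma mem_ub_pair {X : Type*} [AddCommGroup X] [PartialOrder X] (u a b : X) :
    u ∈ upperBounds {a, b} ↔ a ≤ u ∧ b ≤ u := by simp [upperBounds]

lemma pdisj_neg_left {X : Type*} [AddCommGroup X] [PartialOrder X] {w x : X}
    (h : PDisj w x) : PDisj (-w) x := by
  unfold PDisj at *
  have e1 : ({-w + x, -(-w) - x} : Set X) = {w - x, -w + x} := by
    rw [Set.pair_comm]; congr 1 <;> abel_nf
  have e2 : ({-w - x, -(-w) + x} : Set X) = {w + x, -w - x} := by
    rw [Set.pair_comm]; congr 1 <;> abel_nf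
  rw [e1, e2, h]

lemma pdisj_neg_right {X : Type*} [AddCommGroup X] [PartialOrder X] {w x : X}
    (h : PDisj w x) : PDisj w (-x) := by
  unfold PDisj at *
  have e1 : ({w + -x, -w - -x} : Set X) = {w - x, -w + x} := by congr 1 <;> abel_nf
  have e2 : ({w - -x, -w + -x} : Set X) = {w + x, -w - x} := by congr 1 <;> abel_nf
  rw [e1, e2, h]

/-- Key approximation step. -/
lemma aux_key {X : Type*}
    [NormedAddCommGroup X] [NormedSpace ℝ X] [PartialOrder X]
    [CovariantClass X X (· + ·) (· ≤ ·)]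
    (hreg : ∀ x : X, ‖x‖ = sInf {r : ℝ | ∃ y : X, -y ≤ x ∧ x ≤ y ∧ ‖y‖ = r})
    (hclosed : IsClosed {x : X | 0 ≤ x})
    (x u y : X) (g : ℕ → X) (hg : Filter.Tendsto g Filter.atTop (nhds y))
    (hd : ∀ n, PDisj (g n) x)
    (hu : u ∈ upperBounds {y + x, -y - x}) : y - x ≤ u := by
  obtain ⟨hy1, hy2⟩ := (mem_ub_pair u _ _).1 hu
  -- choose approximants
  have hex : ∀ n : ℕ, ∃ w : X, -w ≤ y - g n ∧ y - g n ≤ w ∧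
      ‖w‖ < ‖y - g n‖ + 1 / (n + 1) := by
    intro n
    have hεpos : (0 : ℝ) < 1 / (n + 1) := by positivity
    by_cases hv : y - g n = 0
    · exact ⟨0, by simp [hv], by simp [hv], by simpa [hv] using hεpos⟩
    · have hnorm : 0 < ‖y - g n‖ := norm_pos_iff.2 hv
      set S : Set ℝ := {r : ℝ | ∃ w : X, -w ≤ y - g n ∧ y - g n ≤ w ∧ ‖w‖ = r} with hS
      have hSne : S.Nonempty := by
        by_contra h
        rw [Set.not_nonempty_iff_eq_empty] at h
        have := hreg (y - g n)
        rw [← hS, h, Real.sInf_empty] at this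
        exact absurd this (by linarith)
      have hlt : sInf S < ‖y - g n‖ + 1 / (n + 1) := by
        rw [← hreg (y - g n)]; linarith
      obtain ⟨r, ⟨w, hw1, hw2, hw3⟩, hr⟩ := exists_lt_of_csInf_lt hSne hlt
      exact ⟨w, hw1, hw2, by rw [hw3]; exact hr⟩
  choose z hz1 hz2 hz3 using hex
  -- z tends to 0
  have hz0 : Filter.Tendsto z Filter.atTop (nhds 0) := by
    rw [tendsto_zero_iff_norm_tendsto_zero]
    have hb : Filter.Tendsto (fun n : ℕ => ‖y - g n‖ + 1 / (n + 1)) Filter.atTop (nhds 0) := by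
      have h1 : Filter.Tendsto (fun n : ℕ => ‖y - g n‖) Filter.atTop (nhds 0) := by
        have := (tendsto_iff_norm_sub_tendsto_zero).1 hg
        simpa [norm_sub_rev] using this
      have h2 : Filter.Tendsto (fun n : ℕ => 1 / ((n : ℝ) + 1)) Filter.atTop (nhds 0) :=
        tendsto_one_div_add_atTop_nhds_zero_nat
      simpa using h1.add h2
    exact squeeze_zero (fun n => norm_nonneg _) (fun n => (hz3 n).le) hb
  -- pointwise positivity
  have hkey : ∀ n, (0 : X) ≤ u + z n + z n - (y - x) := by
    intro n
    have h1 : g n + x ≤ u + z n := by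
      have : (y + x) + (g n - y) ≤ u + z n := by
        refine add_le_add hy1 ?_
        have h := neg_le.mp (hz1 n)
        simpa [neg_sub] using h
      calc g n + x = (y + x) + (g n - y) := by abel
        _ ≤ u + z n := this
    have h2 : -g n - x ≤ u + z n := by
      have : (-y - x) + (y - g n) ≤ u + z n := add_le_add hy2 (hz2 n)
      calc -g n - x = (-y - x) + (y - g n) := by abel
        _ ≤ u + z n := this
    have hub : u + z n ∈ upperBounds {g n + x, -(g n) - x} :=
      (mem_ub_pair _ _ _).2 ⟨h1, h2⟩
    rw [hd n] at hub
    have h3 : g n - x ≤ u + z n := ((mem_ub_pair _ _ _).1 hub).1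
    have h4 : y - x ≤ u + z n + z n := by
      have : (g n - x) + (y - g n) ≤ (u + z n) + z n := add_le_add h3 (hz2 n)
      calc y - x = (g n - x) + (y - g n) := by abel
        _ ≤ u + z n + z n := this
    rwa [← sub_nonneg] at h4
  -- pass to the limit
  have hlim : Filter.Tendsto (fun n => u + z n + z n - (y - x)) Filter.atTop
      (nhds (u - (y - x))) := by
    have h := ((hz0.add hz0).const_add u).sub_const (y - x)
    simpa [← add_assoc] using h
  have : u - (y - x) ∈ {x : X | 0 ≤ x} :=
    hclosed.mem_of_tendsto hlim (Filter.Eventually.of_forall hkey)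
  rwa [← sub_nonneg]

lemma pdisj_closed {X : Type*}
    [NormedAddCommGroup X] [NormedSpace ℝ X] [PartialOrder X]
    [CovariantClass X X (· + ·) (· ≤ ·)]
    (hreg : ∀ x : X, ‖x‖ = sInf {r : ℝ | ∃ y : X, -y ≤ x ∧ x ≤ y ∧ ‖y‖ = r})
    (hclosed : IsClosed {x : X | 0 ≤ x})
    (x : X) : IsClosed {y : X | PDisj y x} := by
  refine IsSeqClosed.isClosed ?_
  intro g y hgmem hg
  have hd : ∀ n, PDisj (g n) x := hgmem
  -- show PDisj y x
  apply Set.eq_of_subset_of_subset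
  · intro u hu
    rw [mem_ub_pair] at hu ⊢
    constructor
    · exact aux_key hreg hclosed x u y g hg hd ((mem_ub_pair _ _ _).2 hu)
    · -- -y + x ≤ u : apply with -y, -x
      have hd' : ∀ n, PDisj (-(g n)) (-x) := fun n => pdisj_neg_right (pdisj_neg_left (hd n))
      have hg' : Filter.Tendsto (fun n => -(g n)) Filter.atTop (nhds (-y)) := hg.neg
      have hu' : u ∈ upperBounds {(-y) + (-x), -(-y) - (-x)} := by
        rw [mem_ub_pair]
        constructor
        · calc -y + -x = -y - x := by abel
            _ ≤ u := hu.2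
        · calc -(-y) - -x = y + x := by abel
            _ ≤ u := hu.1
      have := aux_key hreg hclosed (-x) u (-y) _ hg' hd' hu'
      calc -y + x = -y - -x := by abel
        _ ≤ u := this
  · intro u hu
    rw [mem_ub_pair] at hu ⊢
    have hd' : ∀ n, PDisj (g n) (-x) := fun n => pdisj_neg_right (hd n)
    constructor
    · have hu' : u ∈ upperBounds {y + (-x), -y - (-x)} := by
        rw [mem_ub_pair]
        exact ⟨by calc y + -x = y - x := by abel
                  _ ≤ u := hu.1,
               by calc -y - -x = -y + x := by abel
                  _ ≤ u := hu.2⟩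
      have := aux_key hreg hclosed (-x) u y g hg hd' hu'
      calc y + x = y - -x := by abel
        _ ≤ u := this
    · have hd'' : ∀ n, PDisj (-(g n)) x := fun n => pdisj_neg_left (hd n)
      have hg' : Filter.Tendsto (fun n => -(g n)) Filter.atTop (nhds (-y)) := hg.neg
      have hu' : u ∈ upperBounds {(-y) + x, -(-y) - x} := by
        rw [mem_ub_pair]
        exact ⟨hu.2, by calc -(-y) - x = y - x := by abel
                     _ ≤ u := hu.1⟩
      have := aux_key hreg hclosed x u (-y) _ hg' hd'' hu'
      calc -y - x = -y - x := rfl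
        _ ≤ u := this

/-- In a pre-Riesz space with a regular norm and closed cone, every band is norm closed. -/
theorem stmt8 {X : Type*}
    [NormedAddCommGroup X] [NormedSpace ℝ X] [PartialOrder X]
    [CovariantClass X X (· + ·) (· ≤ ·)]
    (hsmul : ∀ (c : ℝ) (x : X), 0 ≤ c → 0 ≤ x → 0 ≤ c • x)
    (hpr : ∀ x y z : X, upperBounds {x + y, x + z} ⊆ upperBounds {y, z} → 0 ≤ x)
    (hreg : ∀ x : X, ‖x‖ = sInf {r : ℝ | ∃ y : X, -y ≤ x ∧ x ≤ y ∧ ‖y‖ = r})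
    (hclosed : IsClosed {x : X | 0 ≤ x})
    (B : Set X) (hB : Dcompl (Dcompl B) = B) : IsClosed B := by
  rw [← hB]
  have : Dcompl (Dcompl B) = ⋂ x ∈ Dcompl B, {y : X | PDisj y x} := by
    ext y; simp [Dcompl, Set.mem_iInter]
  rw [this]
  exact isClosed_biInter fun x _ => pdisj_closed hreg hclosed x
end

section
/- In a pre-Riesz space X, a linear operator T: D(T) ⊆ X → X is local (x ∈ D(T), y ∈ X, x ⊥ y implies Tx ⊥ y) if and only if T is band preserving (for every band B in X, T(B ∩ D(T)) ⊆ B). -/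
section Disjointness

variable {X : Type*} [AddCommGroup X] [PartialOrder X]

theorem PDisj.symm {x y : X} (h : PDisj x y) : PDisj y x := by
  unfold PDisj at h ⊢
  rw [Set.pair_comm (y - x)]
  convert h using 3 <;> abel_nf

theorem mem_dcompl_singleton {x y : X} : x ∈ Dcompl {y} ↔ PDisj x y := by
  simp [Dcompl]

theorem subset_dcompl_dcompl (M : Set X) : M ⊆ Dcompl (Dcompl M) :=
  fun x hx _ hy => (hy x hx).symm

theorem dcompl_anti {M N : Set X} (h : M ⊆ N) : Dcompl N ⊆ Dcompl M :=
  fun _ hy x hx => hy x (h hx)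

theorem dcompl_dcompl_dcompl (M : Set X) : Dcompl (Dcompl (Dcompl M)) = Dcompl M :=
  (dcompl_anti (subset_dcompl_dcompl M)).antisymm (subset_dcompl_dcompl _)

end Disjointness

theorem stmt9_general {X : Type*} [AddCommGroup X] [PartialOrder X] [Module ℝ X]
    (D : Submodule ℝ X) (T : D →ₗ[ℝ] X) :
    (∀ (x : D) (y : X), PDisj (x : X) y → PDisj (T x) y) ↔
    (∀ B : Set X, Dcompl (Dcompl B) = B → ∀ x : D, (x : X) ∈ B → T x ∈ B) := by
  constructor
  · intro hlocal B hB x hx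
    rw [← hB]
    exact fun y hy => hlocal x y (hy x hx).symm
  · intro hband x y hxy
    have hxB : (x : X) ∈ Dcompl {y} := mem_dcompl_singleton.mpr hxy
    exact mem_dcompl_singleton.mp (hband _ (dcompl_dcompl_dcompl {y}) x hxB)

/-- In a pre-Riesz space, a linear operator `T : D(T) ⊆ X → X` is local
(`x ⊥ y ⇒ Tx ⊥ y`) iff it is band preserving (`T(B ∩ D(T)) ⊆ B` for every band `B`). -/
theorem stmt9 {X : Type*} [AddCommGroup X] [PartialOrder X] [IsOrderedAddMonoid X] [Module ℝ X] [PosSMulStrictMono ℝ X] [PosSMulReflectLT ℝ X]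
    (hpr : ∀ x y z : X, upperBounds {x + y, x + z} ⊆ upperBounds {y, z} → 0 ≤ x)
    (D : Submodule ℝ X) (T : D →ₗ[ℝ] X) :
    (∀ (x : D) (y : X), PDisj (x : X) y → PDisj (T x) y) ↔
    (∀ B : Set X, Dcompl (Dcompl B) = B → ∀ x : D, (x : X) ∈ B → T x ∈ B) :=
  stmt9_general D T
end

section
/- Let X be a pre-Riesz space and T: X → X a bipositive linear bijection. Then T is disjointness preserving: x ⊥ y implies Tx ⊥ Ty. -/
section

variable {X Y : Type*} [AddCommGroup X] [PartialOrder X] [AddCommGroup Y] [PartialOrder Y]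

def OrderAddMonoidIso.ofBipositive [IsOrderedAddMonoid X] [IsOrderedAddMonoid Y] (e : X ≃+ Y)
    (he : ∀ x, 0 ≤ x ↔ 0 ≤ e x) : X ≃+o Y where
  __ := e
  map_le_map_iff' {a b} := by
    change e a ≤ e b ↔ a ≤ b
    rw [← sub_nonneg, ← map_sub, ← he, sub_nonneg]

theorem PDisj.map_orderAddMonoidIso (e : X ≃+o Y) {x y : X} (h : PDisj x y) :
    PDisj (e x) (e y) := by
  have upperBounds_pair (a b : X) : upperBounds {e a, e b} = e '' upperBounds {a, b} := by
    rw [← Set.image_pair]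
    exact e.toOrderIso.upperBounds_image
  simp only [PDisj, ← map_add, ← map_sub, ← map_neg, upperBounds_pair] at h ⊢
  rw [h]

end

theorem stmt14_general {X : Type*} [AddCommGroup X] [PartialOrder X] [IsOrderedAddMonoid X] [Module ℝ X]
    (T : X →ₗ[ℝ] X) (hbij : Function.Bijective T)
    (hbi : ∀ x : X, 0 ≤ x ↔ 0 ≤ T x)
    (x y : X) (h : PDisj x y) : PDisj (T x) (T y) :=
  h.map_orderAddMonoidIso (.ofBipositive (LinearEquiv.ofBijective T hbij).toAddEquiv hbi)

/-- A bipositive linear bijection of a pre-Riesz space is disjointness preserving. -/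
theorem stmt14 {X : Type*} [AddCommGroup X] [PartialOrder X] [IsOrderedAddMonoid X] [Module ℝ X]
    [PosSMulStrictMono ℝ X]
    (hpr : ∀ x y z : X, upperBounds {x + y, x + z} ⊆ upperBounds {y, z} → 0 ≤ x)
    (T : X →ₗ[ℝ] X) (hbij : Function.Bijective T)
    (hbi : ∀ x : X, 0 ≤ x ↔ 0 ≤ T x)
    (x y : X) (h : PDisj x y) : PDisj (T x) (T y) :=
  stmt14_general T hbij hbi x y h
end
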